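/- arXiv:math/0607279 — 7 statements merged into one kernel-verified Lean document; each statement's English description precedes it below -/
import Mathlib

section
/- Let R be a commutative ring, n ≥ 1, k ≥ 2, let 𝓕 : (S_n)^{k-2} → R be any map, let M : (Fin n)^k → R be a k-dimensional hypermatrix, and let g be an n × n matrix over R. Define the hypermatrix g·M by (g·M)_{i₁,i₂,i₃,…,i_k} = ∑_{j=1}^n g_{i₂,j} M_{i₁,j,i₃,…,i_k} (g acts on the second index). Then Det_𝓕(g·M) = det(g) · Det_𝓕(M). -/
/-- The `𝓕`-determinant of a `k`-dimensional hypermatrix (`k = m + 2`), where the first two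
indices are explicit and the remaining `m = k - 2` indices are gathered in a tuple:
`Det_𝓕(M) = ∑_{(σ₂,σ₃,…,σ_k)} sign(σ₂) ⋅ 𝓕(σ₃,…,σ_k) ⋅ ∏_i M_{i,σ₂(i),…,σ_k(i)}`. -/
def DetF {R : Type*} [CommRing R] {n m : ℕ}
    (𝓕 : (Fin m → Equiv.Perm (Fin n)) → R)
    (M : Fin n → Fin n → (Fin m → Fin n) → R) : R :=
  ∑ σ₂ : Equiv.Perm (Fin n), ∑ τ : Fin m → Equiv.Perm (Fin n),
    ((Equiv.Perm.sign σ₂ : ℤ) : R) * 𝓕 τ * ∏ i : Fin n, M i (σ₂ i) (fun j => τ j i)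

private lemma detF_key {R : Type*} [CommRing R] {n : ℕ}
    (g N : Matrix (Fin n) (Fin n) R) :
    ∑ σ : Equiv.Perm (Fin n),
        ((Equiv.Perm.sign σ : ℤ) : R) * ∏ i, (∑ j, g (σ i) j * N i j) =
      Matrix.det g * ∑ σ : Equiv.Perm (Fin n),
        ((Equiv.Perm.sign σ : ℤ) : R) * ∏ i, N i (σ i) := by
  have h1 : ∑ σ : Equiv.Perm (Fin n),
      ((Equiv.Perm.sign σ : ℤ) : R) * ∏ i, (∑ j, g (σ i) j * N i j)
      = (g * N.transpose).det := by
    rw [Matrix.det_apply]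
    refine Finset.sum_congr rfl fun σ _ => ?_
    simp [Units.smul_def, zsmul_eq_mul, Matrix.mul_apply]
  have h2 : ∑ σ : Equiv.Perm (Fin n),
      ((Equiv.Perm.sign σ : ℤ) : R) * ∏ i, N i (σ i) = N.det := by
    rw [← Matrix.det_transpose, Matrix.det_apply]
    refine Finset.sum_congr rfl fun σ _ => ?_
    simp [Units.smul_def, zsmul_eq_mul]
  rw [h1, h2, Matrix.det_mul, Matrix.det_transpose]

/-- invariance of the `𝓕`-determinant under the action of the linear group on
the second index: `Det_𝓕(g·M) = det(g) ⋅ Det_𝓕(M)` where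
`(g·M)_{i₁,i₂,i₃,…,i_k} = ∑_{j} g_{i₂,j} M_{i₁,j,i₃,…,i_k}`. -/
theorem detF_linear_invariance {R : Type*} [CommRing R] {n m : ℕ} (hn : 1 ≤ n)
    (𝓕 : (Fin m → Equiv.Perm (Fin n)) → R)
    (M : Fin n → Fin n → (Fin m → Fin n) → R)
    (g : Matrix (Fin n) (Fin n) R) :
    DetF 𝓕 (fun i₁ i₂ t => ∑ j : Fin n, g i₂ j * M i₁ j t) =
      Matrix.det g * DetF 𝓕 M := by
  unfold DetF
  rw [Finset.sum_comm]
  conv_rhs => rw [Finset.sum_comm]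
  rw [Finset.mul_sum]
  refine Finset.sum_congr rfl fun τ _ => ?_
  have := detF_key g (fun i j => M i j (fun l => τ l i))
  calc ∑ σ : Equiv.Perm (Fin n),
        ((Equiv.Perm.sign σ : ℤ) : R) * 𝓕 τ *
          ∏ i, ∑ j, g (σ i) j * M i j (fun l => τ l i)
      = 𝓕 τ * ∑ σ : Equiv.Perm (Fin n),
          ((Equiv.Perm.sign σ : ℤ) : R) *
            ∏ i, ∑ j, g (σ i) j * M i j (fun l => τ l i) := by
        rw [Finset.mul_sum]; exact Finset.sum_congr rfl fun σ _ => by ring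
    _ = 𝓕 τ * (Matrix.det g * ∑ σ : Equiv.Perm (Fin n),
          ((Equiv.Perm.sign σ : ℤ) : R) * ∏ i, M i (σ i) (fun l => τ l i)) := by
        rw [this]
    _ = Matrix.det g * ∑ σ : Equiv.Perm (Fin n),
          ((Equiv.Perm.sign σ : ℤ) : R) * 𝓕 τ * ∏ i, M i (σ i) (fun l => τ l i) := by
        rw [Finset.mul_sum, Finset.mul_sum, Finset.mul_sum]
        exact Finset.sum_congr rfl fun σ _ => by ring
end

section
/- Let L = {x₁,…,x_n} be a finite meet-semilattice, let R be a commutative ring, and for each x ∈ L fix an element z_x ∈ L with z_x ≤ x and a function F_x : L → R. Define f_x : L → R by f_x(z) = ∑_{y ∈ L} μ(y,z) F_x(y), where μ is the Möbius function of L. Then the n × n matrix determinant det( F_{x_i}(z_{x_i} ∧ x_j) )_{1≤i,j≤n} equals ∏_{x ∈ L} f_x(x) if z_x = x for every x ∈ L, and equals 0 otherwise. -/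
open Finset

/-- A permutation of a finite partial order satisfying `σ x ≤ x` everywhere is the identity. -/
lemma perm_eq_id_of_le {L : Type*} [Fintype L] [PartialOrder L] (σ : Equiv.Perm L)
    (h : ∀ x, σ x ≤ x) (x : L) : σ x = x := by
  have hk : ∀ (k : ℕ) (y : L), (σ ^ k) y ≤ y := by
    intro k
    induction k with
    | zero => intro y; simp
    | succ n ih =>
      intro y
      have h1 : (σ ^ (n + 1)) y = (σ ^ n) (σ y) := by rw [pow_succ]; rfl
      rw [h1]
      exact (ih (σ y)).trans (h y)
  have hord : σ ^ orderOf σ = 1 := pow_orderOf_eq_one σ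
  have hpos : 0 < orderOf σ := orderOf_pos σ
  obtain ⟨n, hn⟩ : ∃ n, orderOf σ = n + 1 := ⟨orderOf σ - 1, (Nat.succ_pred_eq_of_pos hpos).symm⟩
  have h1 : x = (σ ^ (n + 1)) x := by rw [← hn, hord]; rfl
  have h2 : (σ ^ (n + 1)) x = (σ ^ n) (σ x) := by rw [pow_succ]; rfl
  refine le_antisymm (h x) ?_
  calc x = (σ ^ n) (σ x) := h1.trans h2
    _ ≤ σ x := hk n (σ x)

/-- Lindström's theorem, slight generalization: let `L` be a finite
meet-semilattice, `R` a commutative ring; for each `x ∈ L` fix `z x ≤ x` and a function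
`F x : L → R`, and let `f x w = ∑_{y ∈ L} μ(y,w) F x y` with `μ` the Möbius function of `L`.
Then `det (F x (z x ⊓ y))_{x,y ∈ L}` equals `∏_x f x x` if `z x = x` for all `x`, and `0`
otherwise. -/
theorem lindstrom {L R : Type*} [Fintype L] [DecidableEq L] [SemilatticeInf L]
    [LocallyFiniteOrder L] [CommRing R]
    (z : L → L) (hz : ∀ x, z x ≤ x) (F : L → L → R)
    (f : L → L → R) (hf : ∀ x w, f x w = ∑ y : L, IncidenceAlgebra.mu R y w * F x y) :
    Matrix.det (Matrix.of fun x y : L => F x (z x ⊓ y)) =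
      if ∀ x, z x = x then ∏ x : L, f x x else 0 := by
  classical
  -- key: ∑_{w ≤ y} μ(u,w) = δ(u,y)
  have key : ∀ u y : L, (∑ w : L, if w ≤ y then IncidenceAlgebra.mu R u w else 0)
      = if u = y then 1 else 0 := by
    intro u y
    have h1 : ∀ w : L, (if w ≤ y then IncidenceAlgebra.mu R u w else 0)
        = if w ∈ Finset.Icc u y then IncidenceAlgebra.mu R u w else 0 := by
      intro w
      by_cases h1 : w ≤ y <;> by_cases h2 : u ≤ w <;>
        simp [Finset.mem_Icc, h1, h2, IncidenceAlgebra.apply_eq_zero_of_not_le]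
    simp_rw [h1]
    rw [Finset.sum_ite_mem, Finset.univ_inter]
    exact IncidenceAlgebra.sum_Icc_mu_right u y
  -- Möbius inversion: F x y = ∑_{w ≤ y} f x w.
  have hinv : ∀ x y : L, F x y = ∑ w : L, (if w ≤ y then f x w else 0) := by
    intro x y
    calc F x y = ∑ u : L, (if u = y then (1:R) else 0) * F x u := by
          rw [Finset.sum_eq_single y] <;> simp +contextual
      _ = ∑ u : L, (∑ w : L, if w ≤ y then IncidenceAlgebra.mu R u w else 0) * F x u := by
          simp_rw [key]
      _ = ∑ w : L, (if w ≤ y then f x w else 0) := by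
          simp_rw [Finset.sum_mul, ite_mul, zero_mul]
          rw [Finset.sum_comm]
          refine Finset.sum_congr rfl fun w _ => ?_
          by_cases h1 : w ≤ y <;> simp [h1, hf]
  set A : Matrix L L R := Matrix.of fun x w => if w ≤ z x then f x w else 0 with hA
  set B : Matrix L L R := Matrix.of fun w y => if w ≤ y then (1:R) else 0 with hB
  have hM : (Matrix.of fun x y : L => F x (z x ⊓ y)) = A * B := by
    ext x y
    rw [Matrix.mul_apply]
    simp only [Matrix.of_apply, hinv x (z x ⊓ y), hA, hB]
    refine Finset.sum_congr rfl fun w _ => ?_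
    by_cases h1 : w ≤ z x <;> by_cases h2 : w ≤ y <;>
      simp [h1, h2, le_inf_iff]
  have hdetB : B.det = 1 := by
    rw [Matrix.det_apply]
    rw [Finset.sum_eq_single 1]
    · simp [hB]
    · intro σ _ hσ
      have : ∃ i, ¬ σ i ≤ i := by
        by_contra hc
        push_neg at hc
        exact hσ (Equiv.ext (perm_eq_id_of_le σ hc))
      obtain ⟨i, hi⟩ := this
      rw [Finset.prod_eq_zero (Finset.mem_univ i)]
      · simp
      · simp [hB, hi]
    · simp
  have hdetA : A.det = if ∀ x, z x = x then ∏ x : L, f x x else 0 := by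
    rw [Matrix.det_apply]
    rw [Finset.sum_eq_single 1]
    · simp only [Equiv.Perm.sign_one, one_smul, Equiv.Perm.one_apply]
      by_cases hzx : ∀ x, z x = x
      · rw [if_pos hzx]
        refine Finset.prod_congr rfl fun x _ => ?_
        simp [hA, hzx x]
      · rw [if_neg hzx]
        push_neg at hzx
        obtain ⟨x₀, hx₀⟩ := hzx
        rw [Finset.prod_eq_zero (Finset.mem_univ x₀)]
        simp only [hA, Matrix.of_apply]
        rw [if_neg fun h => hx₀ (le_antisymm (hz x₀) h)]
    · intro σ _ hσ
      have : ∃ i, ¬ i ≤ z (σ i) := by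
        by_contra hc
        push_neg at hc
        have hle : ∀ i, σ⁻¹ i ≤ i := by
          intro i
          have := (hc (σ⁻¹ i)).trans (hz (σ (σ⁻¹ i)))
          simpa using this
        have : σ⁻¹ = 1 := Equiv.ext (perm_eq_id_of_le σ⁻¹ hle)
        exact hσ (by rw [← inv_inv σ, this, inv_one])
      obtain ⟨i, hi⟩ := this
      rw [Finset.prod_eq_zero (Finset.mem_univ i)]
      · simp
      · simp [hA, hi]
    · simp
  rw [hM, Matrix.det_mul, hdetB, hdetA, mul_one]
end

section
/- Let R be a commutative ring, let f : ℕ⁺ → R, and let m, n be positive integers with m ∣ n. Then ∑_{d ∣ n} μ(n/d) · f(gcd(m,d)) equals (f ∗ μ)(n) = ∑_{d ∣ n} f(d) μ(n/d) if m = n, and equals 0 otherwise. Here μ is the number-theoretic Möbius function and ∗ denotes Dirichlet convolution. -/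
/-!
Write `g = f ∗ μ`, so that `f k = ∑_{e ∣ k} g e` by Möbius inversion. Since the divisors of
`gcd(m, d)` are the divisors `e` of `m` with `e ∣ d`, exchanging the order of summation turns the
left-hand side into `∑_{e ∣ m} g e · ∑_{d ∣ n, e ∣ d} μ(n/d)`. Writing `d = e c`, the inner sum is
`∑_{c ∣ n/e} μ((n/e)/c) = [n = e]`, and as `e ∣ m ∣ n` only `e = m = n` can contribute.
-/

open Finset ArithmeticFunction
open scoped ArithmeticFunction.Moebius

namespace Nat

lemma divisors_gcd_eq_filter {m : ℕ} (hm : m ≠ 0) (d : ℕ) :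
    (gcd m d).divisors = {e ∈ m.divisors | e ∣ d} := by
  ext e
  simp [dvd_gcd_iff, hm]

lemma filter_dvd_divisors_eq_map_mul {e k : ℕ} (he : e ≠ 0) :
    {d ∈ (e * k).divisors | e ∣ d} = k.divisors.map ⟨(e * ·), mul_right_injective₀ he⟩ := by
  ext d
  simp only [mem_filter, mem_divisors, mem_map, Function.Embedding.coeFn_mk]
  constructor
  · rintro ⟨⟨hd, hk⟩, c, rfl⟩
    exact ⟨c, ⟨(mul_dvd_mul_iff_left he).1 hd, right_ne_zero_of_mul hk⟩, rfl⟩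
  · rintro ⟨c, ⟨hc, hk⟩, rfl⟩
    exact ⟨⟨mul_dvd_mul_left e hc, mul_ne_zero he hk⟩, dvd_mul_right e c⟩

end Nat

namespace ArithmeticFunction

lemma sum_divisors_moebius (k : ℕ) : ∑ c ∈ k.divisors, μ c = if k = 1 then 1 else 0 := by
  rw [← coe_mul_zeta_apply, moebius_mul_coe_zeta, one_apply]

lemma sum_filter_dvd_divisors_moebius_div {e n : ℕ} (hn : n ≠ 0) (hen : e ∣ n) :
    ∑ d ∈ n.divisors with e ∣ d, μ (n / d) = if n = e then 1 else 0 := by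
  obtain ⟨k, rfl⟩ := hen
  have he : e ≠ 0 := left_ne_zero_of_mul hn
  rw [Nat.filter_dvd_divisors_eq_map_mul he, sum_map]
  simp only [Function.Embedding.coeFn_mk, Nat.mul_div_mul_left _ _ (Nat.pos_of_ne_zero he)]
  rw [Nat.sum_div_divisors k (fun c => μ c), sum_divisors_moebius]
  simp only [Nat.mul_eq_left he]

variable {R : Type*} [CommRing R]

def mulMoebius (f : ℕ → R) (n : ℕ) : R := ∑ d ∈ n.divisors, f d * μ (n / d)

lemma sum_divisors_mulMoebius (f : ℕ → R) {k : ℕ} (hk : k ≠ 0) :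
    ∑ e ∈ k.divisors, mulMoebius f e = f k := by
  refine (sum_eq_iff_sum_mul_moebius_eq.2 (fun n _ => ?_)) k (Nat.pos_of_ne_zero hk)
  rw [mulMoebius, Nat.sum_divisorsAntidiagonal' (fun a b => (μ a : R) * f b)]
  exact sum_congr rfl fun d _ => mul_comm _ _

lemma sum_moebius_div_mul_gcd {f : ℕ → R} {m n : ℕ} (hn : n ≠ 0) (hmn : m ∣ n) :
    ∑ d ∈ n.divisors, (μ (n / d) : R) * f (Nat.gcd m d) =
      if m = n then mulMoebius f n else 0 := by
  have hm : m ≠ 0 := ne_zero_of_dvd_ne_zero hn hmn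
  calc ∑ d ∈ n.divisors, (μ (n / d) : R) * f (Nat.gcd m d)
      = ∑ d ∈ n.divisors, ∑ e ∈ m.divisors with e ∣ d, (μ (n / d) : R) * mulMoebius f e := by
        refine sum_congr rfl fun d _ => ?_
        rw [← sum_divisors_mulMoebius f (Nat.gcd_ne_zero_left hm), Nat.divisors_gcd_eq_filter hm,
          mul_sum]
    _ = ∑ e ∈ m.divisors, ∑ d ∈ n.divisors with e ∣ d, (μ (n / d) : R) * mulMoebius f e :=
        sum_comm' fun d e => by simp only [mem_filter]; tauto
    _ = ∑ e ∈ m.divisors, if n = e then mulMoebius f e else 0 := by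
        refine sum_congr rfl fun e he => ?_
        rw [← sum_mul, ← Int.cast_sum,
          sum_filter_dvd_divisors_moebius_div hn ((Nat.dvd_of_mem_divisors he).trans hmn)]
        split_ifs <;> simp
    _ = if m = n then mulMoebius f n else 0 := by
        rw [sum_ite_eq]
        congr 1
        simpa [hm] using ⟨fun h => Nat.dvd_antisymm hmn h, fun h => h ▸ dvd_rfl⟩

end ArithmeticFunction

theorem cesaro_lemma_general {R : Type*} [CommRing R] (f : ℕ → R) (m n : ℕ)
    (hmn : m ∣ n) :
    ∑ d ∈ n.divisors, ((ArithmeticFunction.moebius (n / d) : ℤ) : R) * f (Nat.gcd m d) =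
      if m = n then ∑ d ∈ n.divisors, f d * ((ArithmeticFunction.moebius (n / d) : ℤ) : R)
      else 0 := by
  rcases eq_or_ne n 0 with rfl | hn
  · simp
  · exact sum_moebius_div_mul_gcd hn hmn

/-- Cesàro's lemma: for a commutative ring `R`, `f : ℕ⁺ → R` and positive
integers `m ∣ n`, `∑_{d ∣ n} μ(n/d) f(gcd(m,d))` equals `(f ∗ μ)(n) = ∑_{d ∣ n} f(d) μ(n/d)`
if `m = n`, and `0` otherwise, where `μ` is the number-theoretic Möbius function. -/
theorem cesaro_lemma {R : Type*} [CommRing R] (f : ℕ → R) (m n : ℕ)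
    (hm : 0 < m) (hn : 0 < n) (hmn : m ∣ n) :
    ∑ d ∈ n.divisors, ((ArithmeticFunction.moebius (n / d) : ℤ) : R) * f (Nat.gcd m d) =
      if m = n then ∑ d ∈ n.divisors, f d * ((ArithmeticFunction.moebius (n / d) : ℤ) : R)
      else 0 :=
  cesaro_lemma_general f m n hmn
end

section
/- Let L = {x₁,…,x_n} be a finite meet-semilattice, let R be a commutative ring, let k ≥ 2, let 𝓕 : (S_n)^{k-2} → R be any map, and for each x ∈ L fix an element z_x ∈ L with z_x ≤ x and a function F_x : L → R. Define f_x : L → R by f_x(z) = ∑_{y ∈ L} μ(y,z) F_x(y), where μ is the Möbius function of L. Consider the k-dimensional hypermatrix M with entries M_{i₁,…,i_k} = F_{x_{i₁}}(z_{x_{i₁}} ∧ x_{i₂} ∧ ⋯ ∧ x_{i_k}). Then Det_𝓕(M) = 𝓕(Id,…,Id) · ∏_{x ∈ L} f_x(x) if z_x = x for every x ∈ L, and Det_𝓕(M) = 0 otherwise. -/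
/-- The meet `a ⊓ v 0 ⊓ v 1 ⊓ ⋯` of an element `a` with a tuple `v` of elements of a
meet-semilattice. -/
def meetAll {L : Type*} [SemilatticeInf L] {m : ℕ} (a : L) (v : Fin m → L) : L :=
  (List.ofFn v).foldr (· ⊓ ·) a

/-!
By Möbius inversion each entry is `∑ y, [y ≤ z (x i₁)] [y ≤ x i₂] [∀ j, y ≤ x (t j)] f (x i₁) y`.
Expanding the product over rows writes `Det_𝓕(M)` as a sum over maps `g : Fin n → L` of
`∏ i, f (x i) (g i)`, times the ordinary determinant of `[g i ≤ x j]`, times an `𝓕`-weighted sum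
over the remaining permutations. The determinant kills every non-injective `g`, and on a finite
poset an injective `g` with `g i ≤ z (x i) ≤ x i` can only be `x` itself, which forces `z = id`.
For `g = x` the only permutations that contribute are the identities.
-/

open Finset

theorem Function.Injective.eq_id_of_forall_le {α : Type*} [PartialOrder α] [Finite α]
    {g : α → α} (hg : Function.Injective g) (hle : ∀ a, g a ≤ a) : g = id := by
  funext a
  induction a using WellFoundedLT.induction with
  | _ a ih => exact (hle a).eq_or_lt.resolve_right fun hlt => hlt.ne (hg (ih _ hlt))

theorem Function.Injective.eq_of_forall_le {ι α : Type*} [PartialOrder α] [Finite α]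
    {x h : ι → α} (hx : Function.Bijective x) (hh : Function.Injective h)
    (hle : ∀ i, h i ≤ x i) : h = x := by
  let e := Equiv.ofBijective x hx
  have hid : h ∘ e.symm = id :=
    (hh.comp e.symm.injective).eq_id_of_forall_le fun a =>
      (hle _).trans_eq (Equiv.ofBijective_apply_symm_apply x hx a)
  funext i
  simpa [e] using congrFun hid (x i)

theorem Equiv.Perm.eq_one_of_forall_le_apply {ι α : Type*} [PartialOrder α] [Finite α]
    {x : ι → α} (hx : Function.Bijective x) {σ : Equiv.Perm ι}
    (hσ : ∀ i, x i ≤ x (σ i)) : σ = 1 := by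
  have : x ∘ ⇑σ⁻¹ = x :=
    (hx.1.comp σ⁻¹.injective).eq_of_forall_le hx fun i => by
      simpa using hσ (σ⁻¹ i)
  exact inv_eq_one.mp (Equiv.ext fun i => hx.1 (congrFun this i))

theorem eq_and_forall_eq_of_injective_of_le {ι α : Type*} [PartialOrder α] [Finite α]
    {x g : ι → α} {z : α → α} (hx : Function.Bijective x) (hz : ∀ w, z w ≤ w)
    (hg : Function.Injective g) (hle : ∀ i, g i ≤ z (x i)) : g = x ∧ ∀ w, z w = w := by
  have hgx := hg.eq_of_forall_le hx fun i => (hle i).trans (hz _)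
  refine ⟨hgx, fun w => ?_⟩
  obtain ⟨i, rfl⟩ := hx.2 w
  exact (hz _).antisymm (hgx ▸ hle i)

theorem Matrix.injective_of_det_ne_zero {ι κ R : Type*} [Fintype ι] [DecidableEq ι]
    [CommRing R]
    (A : κ → ι → R) {g : ι → κ} (h : (Matrix.of fun i j => A (g i) j).det ≠ 0) :
    Function.Injective g := by
  by_contra hg
  obtain ⟨i, j, hij, hne⟩ := Function.not_injective_iff.1 hg
  exact h (Matrix.det_zero_of_row_eq hne (by ext; simp [hij]))

theorem le_meetAll_iff {L : Type*} [SemilatticeInf L] {m : ℕ} {y a : L} {v : Fin m → L} :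
    y ≤ meetAll a v ↔ y ≤ a ∧ ∀ j, y ≤ v j := by
  rw [meetAll]
  induction m generalizing a with
  | zero => simp
  | succ m ih => simp [List.ofFn_succ, ih, Fin.forall_fin_succ, and_left_comm]

namespace IncidenceAlgebra

theorem sum_filter_le_of_eq_sum_mu {𝕜 α : Type*} [Ring 𝕜] [Fintype α] [PartialOrder α]
    [LocallyFiniteOrder α] [DecidableEq α] [DecidableLE α] {F f : α → 𝕜}
    (hf : ∀ v, f v = ∑ y, mu 𝕜 y v * F y) (y : α) :
    ∑ v with v ≤ y, f v = F y := by
  have hIcc : ∀ u, ∑ v with v ≤ y, mu 𝕜 u v = ∑ v ∈ Icc u y, mu 𝕜 u v := fun u => by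
    refine (sum_subset (fun v hv => ?_) fun v hv hv' => ?_).symm
    · simpa using (mem_Icc.1 hv).2
    · exact apply_eq_zero_of_not_le (fun huv => hv' (mem_Icc.2 ⟨huv, by simpa using hv⟩)) _
  calc ∑ v with v ≤ y, f v = ∑ u, (∑ v with v ≤ y, mu 𝕜 u v) * F u := by
        simp_rw [hf, sum_mul]; exact sum_comm
    _ = F y := by simp [hIcc, sum_Icc_mu_right]

end IncidenceAlgebra

theorem DetF_sum_mul_mul {R ι : Type*} [CommRing R] [Fintype ι] {n m : ℕ}
    (𝓕 : (Fin m → Equiv.Perm (Fin n)) → R) (c : Fin n → ι → R) (A : ι → Fin n → R)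
    (B : ι → (Fin m → Fin n) → R) :
    DetF 𝓕 (fun i₁ i₂ t => ∑ y, c i₁ y * A y i₂ * B y t) =
      ∑ g : Fin n → ι, (∏ i, c i (g i)) * (Matrix.of fun i j => A (g i) j).det *
        ∑ τ : Fin m → Equiv.Perm (Fin n), 𝓕 τ * ∏ i, B (g i) (fun j => τ j i) := by
  have hdet (g : Fin n → ι) : (Matrix.of fun i j => A (g i) j).det =
      ∑ σ : Equiv.Perm (Fin n), ((Equiv.Perm.sign σ : ℤ) : R) * ∏ i, A (g i) (σ i) := by
    rw [← Matrix.det_transpose, Matrix.det_apply']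
    rfl
  simp only [DetF, Fintype.prod_sum, hdet, sum_mul, mul_sum, prod_mul_distrib]
  refine (sum_congr rfl fun σ _ => sum_comm).trans (sum_comm.trans ?_)
  exact sum_congr rfl fun g _ =>
    sum_comm.trans (sum_congr rfl fun τ _ => sum_congr rfl fun σ _ => by ring)

theorem Matrix.det_of_ite_le_eq_one {ι α R : Type*} [Fintype ι] [DecidableEq ι]
    [PartialOrder α] [Finite α] [DecidableLE α] [CommRing R] {x : ι → α}
    (hx : Function.Bijective x) :
    (Matrix.of fun i j => if x i ≤ x j then (1 : R) else 0).det = 1 := by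
  rw [← Matrix.det_transpose, Matrix.det_apply', sum_eq_single 1 (fun σ _ hσ => ?_) (by simp)]
  · simp
  · obtain ⟨i, hi⟩ : ∃ i, ¬ x i ≤ x (σ i) := by
      by_contra! h
      exact hσ (Equiv.Perm.eq_one_of_forall_le_apply hx h)
    rw [prod_eq_zero (mem_univ i) (by simp [hi]), mul_zero]

theorem sum_mul_prod_ite_forall_le {ι α R : Type*} [Fintype ι] [DecidableEq ι]
    [PartialOrder α] [Finite α] [DecidableLE α] [CommRing R] {m : ℕ} {x : ι → α}
    (hx : Function.Bijective x) (𝓕 : (Fin m → Equiv.Perm ι) → R) :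
    ∑ τ : Fin m → Equiv.Perm ι, 𝓕 τ * ∏ i, (if ∀ j, x i ≤ x (τ j i) then (1 : R) else 0) =
      𝓕 (fun _ => 1) := by
  rw [Fintype.sum_eq_single (fun _ => 1) fun τ hτ => ?_]
  · simp
  · obtain ⟨j, hj⟩ := Function.ne_iff.1 hτ
    obtain ⟨i, hi⟩ : ∃ i, ¬ x i ≤ x (τ j i) := by
      by_contra! h
      exact hj (Equiv.Perm.eq_one_of_forall_le_apply hx h)
    rw [prod_eq_zero (mem_univ i) (if_neg fun h => hi (h j)), mul_zero]

/-- Lindström's theorem for `𝓕`-determinants: let `L = {x₁,…,x_n}` be a finite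
meet-semilattice, `k = m + 2 ≥ 2`, `𝓕 : (S_n)^{k-2} → R`; for each `w ∈ L` fix `z w ≤ w` and a
function `F w : L → R`, and set `f w v = ∑_{y ∈ L} μ(y,v) F w y`.  Then the `𝓕`-determinant of
the hypermatrix `(F_{x_{i₁}}(z_{x_{i₁}} ∧ x_{i₂} ∧ ⋯ ∧ x_{i_k}))` equals
`𝓕(Id,…,Id) ⋅ ∏_w f w w` if `z w = w` for all `w`, and `0` otherwise. -/
theorem lindstrom_detF {L R : Type*} [Fintype L] [DecidableEq L] [SemilatticeInf L]
    [LocallyFiniteOrder L] [CommRing R] {n m : ℕ}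
    (x : Fin n → L) (hx : Function.Bijective x)
    (𝓕 : (Fin m → Equiv.Perm (Fin n)) → R)
    (z : L → L) (hz : ∀ w, z w ≤ w) (F : L → L → R)
    (f : L → L → R) (hf : ∀ w v, f w v = ∑ y : L, IncidenceAlgebra.mu R y v * F w y) :
    DetF 𝓕 (fun i₁ i₂ t => F (x i₁) (meetAll (z (x i₁) ⊓ x i₂) (fun j => x (t j)))) =
      if ∀ w, z w = w then 𝓕 (fun _ => 1) * ∏ w : L, f w w else 0 := by
  classical
  set c : Fin n → L → R := fun i y => if y ≤ z (x i) then f (x i) y else 0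
  have hentry : ∀ i₁ i₂ (t : Fin m → Fin n),
      F (x i₁) (meetAll (z (x i₁) ⊓ x i₂) fun j => x (t j)) =
      ∑ y, c i₁ y * (if y ≤ x i₂ then 1 else 0) * (if ∀ j, y ≤ x (t j) then 1 else 0) := by
    intro i₁ i₂ t
    rw [← IncidenceAlgebra.sum_filter_le_of_eq_sum_mu (hf (x i₁)), sum_filter]
    simp only [c, ite_zero_mul_ite_zero, mul_one, le_meetAll_iff, le_inf_iff, and_assoc]
  have hsupport : ∀ g : Fin n → L,
      (∏ i, c i (g i)) * (Matrix.of fun i j => if g i ≤ x j then (1 : R) else 0).det ≠ 0 →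
        g = x ∧ ∀ w, z w = w := fun g hg =>
    eq_and_forall_eq_of_injective_of_le hx hz
      (Matrix.injective_of_det_ne_zero (fun y j => if y ≤ x j then (1 : R) else 0)
        (right_ne_zero_of_mul hg)) fun i =>
        by_contra fun h => left_ne_zero_of_mul hg (prod_eq_zero (mem_univ i) (if_neg h))
  simp_rw [hentry, DetF_sum_mul_mul]
  split_ifs with hzid
  · rw [sum_eq_single x (fun g _ hg => ?_) (by simp)]
    · simp [c, hzid, Matrix.det_of_ite_le_eq_one hx, sum_mul_prod_ite_forall_le hx, mul_comm,
        Fintype.prod_bijective x hx (fun i => f (x i) (x i)) (fun w => f w w) fun _ => rfl]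
    · exact by_contra fun h => hg (hsupport g (left_ne_zero_of_mul h)).1
  · exact sum_eq_zero fun g _ => by_contra fun h => hzid (hsupport g (left_ne_zero_of_mul h)).2
end

section
/- Let L be a finite meet-semilattice, let S = {y₁,…,y_n} ⊆ L be a meet-closed subset listed in a linear extension order (i.e., y_i ≤ y_j implies i ≤ j), let R be a commutative ring, and let f : L → R. Define F : S → R by F(y) = ∑_{x ∈ L, x ≤ y} f(x), and define f̂ : S → R by f̂(y_i) = ∑_{x ⊴ y_i} f(x), where x ⊴ y_i means x ≤ y_i and x ≰ y_j for all j < i. Then for every i, F(y_i) = ∑_{y_k ≤ y_i, y_k ∈ S} f̂(y_k). -/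
/-!
Every `x ≤ yᵢ` has a first index `l` with `x ≤ y_l`, i.e. `x ⊴ y_l`, and this `l` is unique.
Meet-closedness forces `y_l ≤ yᵢ`: the meet `y_l ⊓ yᵢ = y_m` lies above `x`, and `m ≤ l` by
the linear extension property, so minimality of `l` gives `m = l`. Hence the down-set of `yᵢ`
is the disjoint union of the blocks `{x | x ⊴ y_l}` over `y_l ≤ yᵢ`, and `F(yᵢ)` splits
accordingly.
-/

section FirstUpperIndex

variable {ι L : Type*} [LinearOrder ι]

/-- The relation `x ⊴ y_l`. -/
def IsFirstUpperIndex [LE L] (y : ι → L) (x : L) (l : ι) : Prop :=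
  x ≤ y l ∧ ∀ j, j < l → ¬ x ≤ y j

theorem IsFirstUpperIndex.unique [LE L] {y : ι → L} {x : L} {a b : ι}
    (ha : IsFirstUpperIndex y x a) (hb : IsFirstUpperIndex y x b) : a = b := by
  rcases lt_trichotomy a b with hab | hab | hab
  · exact absurd ha.1 (hb.2 a hab)
  · exact hab
  · exact absurd hb.1 (ha.2 b hab)

theorem exists_isFirstUpperIndex [Finite ι] [LE L] {y : ι → L} {x : L} {i : ι}
    (hx : x ≤ y i) : ∃ l, IsFirstUpperIndex y x l := by
  obtain ⟨l, hxl, hmin⟩ := wellFounded_lt.has_min {l | x ≤ y l} ⟨i, hx⟩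
  exact ⟨l, hxl, fun j hj hxj => hmin j hxj hj⟩

theorem IsFirstUpperIndex.le_of_le [SemilatticeInf L] {y : ι → L}
    (hmeet : ∀ i j, ∃ l, y i ⊓ y j = y l) (hlin : ∀ i j, y i ≤ y j → i ≤ j)
    {x : L} {l i : ι} (hl : IsFirstUpperIndex y x l) (hx : x ≤ y i) : y l ≤ y i := by
  obtain ⟨m, hm⟩ := hmeet l i
  have hxm : x ≤ y m := hm ▸ le_inf hl.1 hx
  have hml : m ≤ l := hlin m l (hm ▸ inf_le_left)
  have hlm : m = l := eq_of_le_of_not_lt hml fun h => hl.2 m h hxm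
  rw [← hlm, ← hm]
  exact inf_le_right

end FirstUpperIndex

theorem hat_lemma_general {L R : Type*} [Fintype L] [SemilatticeInf L]
    [DecidableRel ((· ≤ ·) : L → L → Prop)] [CommRing R]
    {n : ℕ} (y : Fin n → L)
    (hmeet : ∀ i j : Fin n, ∃ l : Fin n, y i ⊓ y j = y l)
    (hlin : ∀ i j : Fin n, y i ≤ y j → i ≤ j)
    (f : L → R) (i : Fin n) :
    ∑ x ∈ Finset.univ.filter (fun x : L => x ≤ y i), f x =
      ∑ l ∈ Finset.univ.filter (fun l : Fin n => y l ≤ y i),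
        ∑ x ∈ Finset.univ.filter
          (fun x : L => x ≤ y l ∧ ∀ j : Fin n, j < l → ¬ x ≤ y j), f x := by
  classical
  have hcover : Finset.univ.filter (fun x : L => x ≤ y i) =
      (Finset.univ.filter (fun l : Fin n => y l ≤ y i)).biUnion fun l =>
        Finset.univ.filter fun x : L => x ≤ y l ∧ ∀ j : Fin n, j < l → ¬ x ≤ y j := by
    ext x
    simp only [Finset.mem_biUnion, Finset.mem_filter, Finset.mem_univ, true_and]
    constructor
    · intro hx
      obtain ⟨l, hl⟩ := exists_isFirstUpperIndex hx
      exact ⟨l, hl.le_of_le hmeet hlin hx, hl⟩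
    · rintro ⟨l, hli, hxl, -⟩
      exact hxl.trans hli
  rw [hcover, Finset.sum_biUnion]
  intro a _ b _ hab
  simp only [Function.onFun, Finset.disjoint_left, Finset.mem_filter, Finset.mem_univ, true_and]
  exact fun x ha hb => hab (IsFirstUpperIndex.unique ha hb)

/-- let `L` be a finite meet-semilattice, `S = {y₁,…,y_n} ⊆ L` meet-closed and
listed in a linear extension order, `f : L → R`.  With `F(yᵢ) = ∑_{x ≤ yᵢ, x ∈ L} f(x)` and
`f̂(yᵢ) = ∑_{x ⊴ yᵢ} f(x)` (where `x ⊴ yᵢ` means `x ≤ yᵢ` and `x ≰ y_j` for all `j < i`),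
one has `F(yᵢ) = ∑_{y_k ≤ yᵢ, y_k ∈ S} f̂(y_k)` for every `i`. -/
theorem hat_lemma {L R : Type*} [Fintype L] [SemilatticeInf L] [DecidableEq L]
    [DecidableRel ((· ≤ ·) : L → L → Prop)] [CommRing R]
    {n : ℕ} (y : Fin n → L) (hinj : Function.Injective y)
    (hmeet : ∀ i j : Fin n, ∃ l : Fin n, y i ⊓ y j = y l)
    (hlin : ∀ i j : Fin n, y i ≤ y j → i ≤ j)
    (f : L → R) (i : Fin n) :
    ∑ x ∈ Finset.univ.filter (fun x : L => x ≤ y i), f x =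
      ∑ l ∈ Finset.univ.filter (fun l : Fin n => y l ≤ y i),
        ∑ x ∈ Finset.univ.filter
          (fun x : L => x ≤ y l ∧ ∀ j : Fin n, j < l → ¬ x ≤ y j), f x :=
  hat_lemma_general y hmeet hlin f i
end

section
/- Let L be a finite meet-semilattice, let X = {x₁,…,x_n} ⊆ L, and let X̄ = {x₁,…,x_n,x_{n+1},…,x_{n+m}} be the smallest factor-closed subset of L containing X. Let R be a commutative ring; for each x ∈ X fix z_x ∈ X̄ with z_x ≤ x and a function F_x : X̄ → R, and set f_x(z) = ∑_{y ∈ X̄} μ(y,z) F_x(y), where μ is the Möbius function of X̄. Define C_{x,y} = f_x(y) if y ≤ z_x and C_{x,y} = 0 otherwise, and let ζ(u,v) = 1 if u ≤ v and 0 otherwise. Then det( F_{x_i}(z_{x_i} ∧ x_j) )_{1≤i,j≤n} = ∑_{1 ≤ k₁ < k₂ < ⋯ < k_n ≤ n+m} det( C_{x_i, x_{k_j}} )_{1≤i,j≤n} · det( ζ(x_{k_i}, x_j) )_{1≤i,j≤n}. -/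
/-! The matrix `(F i (z i ⊓ x j))` factors as `C * Z`, where `Z k j = ζ(x k, x j)`. Indeed
`(C * Z) i j` is the sum of `f i y` over `y ∈ X̄` with `y ≤ z i ⊓ x j`; since `X̄` is a lower set
containing `z i ⊓ x j`, Möbius inversion turns this sum into `F i (z i ⊓ x j)`. The identity is
then the Cauchy–Binet formula for `det (C * Z)`: expanding `det (A * B)` multilinearly gives a
sum over all maps `p : Fin n → ι`, the non-injective `p` contribute zero, and each injective `p`
is uniquely `κ ∘ τ` with `κ` strictly monotone and `τ` a permutation. -/

open Finset Equiv Function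

theorem Finset.sum_injective_eq_sum_strictMono_sum_perm {ι M : Type*} [Fintype ι] [LinearOrder ι]
    [AddCommMonoid M] {n : ℕ} (g : (Fin n → ι) → M) :
    ∑ p : Fin n → ι with Injective p, g p =
      ∑ κ : Fin n → ι with StrictMono κ, ∑ τ : Perm (Fin n), g (κ ∘ τ) := by
  have hsort : ∀ κ : Fin n → ι, StrictMono κ → ∀ τ : Perm (Fin n), Tuple.sort (κ ∘ τ) = τ⁻¹ :=
    fun κ hκ τ => (Tuple.eq_sort_iff.2 ⟨by simpa [comp_assoc] using hκ.monotone,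
      fun i j hij h => absurd (hκ.injective (by simpa using h)) hij.ne⟩).symm
  rw [← Finset.sum_product']
  symm
  refine Finset.sum_nbij' (fun q => q.1 ∘ q.2) (fun p => (p ∘ Tuple.sort p, (Tuple.sort p)⁻¹))
    ?_ ?_ ?_ ?_ fun _ _ => rfl
  · rintro ⟨κ, τ⟩ h
    simp only [mem_product, mem_filter_univ, mem_univ, and_true] at h ⊢
    exact h.injective.comp τ.injective
  · intro p hp
    simp only [mem_product, mem_filter_univ, mem_univ, and_true] at hp ⊢
    exact (Tuple.monotone_sort p).strictMono_of_injective (hp.comp (Tuple.sort p).injective)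
  · rintro ⟨κ, τ⟩ h
    simp only [mem_product, mem_filter_univ, mem_univ, and_true] at h
    simp only [hsort κ h τ, inv_inv, Prod.mk.injEq, and_true]
    ext i; simp
  · intro p _
    ext i; simp

namespace Matrix
variable {R ι m : Type*} [CommRing R] [Fintype m] [DecidableEq m]

theorem det_mul_eq_sum_prod_mul_det_submatrix [Fintype ι] (A : Matrix m ι R) (B : Matrix ι m R) :
    (A * B).det = ∑ p : m → ι, (∏ i, B (p i) i) * (A.submatrix id p).det := by
  have hrows : Bᵀ * Aᵀ = fun i => ∑ k, B k i • Aᵀ k := by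
    ext i j; simp [mul_apply, Finset.sum_apply, mul_comm]
  rw [← det_transpose, transpose_mul, hrows]
  change detRowAlternating.toMultilinearMap _ = _
  rw [MultilinearMap.map_sum]
  refine Finset.sum_congr rfl fun p _ => ?_
  rw [MultilinearMap.map_smul_univ, smul_eq_mul, ← det_transpose (A.submatrix id p)]
  rfl

theorem det_submatrix_eq_zero_of_not_injective (A : Matrix m ι R) {p : m → ι}
    (hp : ¬ Injective p) : (A.submatrix id p).det = 0 := by
  obtain ⟨i, j, hij, hne⟩ : ∃ i j, p i = p j ∧ i ≠ j := by
    simpa [Injective] using hp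
  exact det_zero_of_column_eq hne fun k => by simp [hij]

theorem det_mul_eq_sum_strictMono [Fintype ι] [LinearOrder ι] {n : ℕ}
    (A : Matrix (Fin n) ι R) (B : Matrix ι (Fin n) R) :
    (A * B).det =
      ∑ κ : Fin n → ι with StrictMono κ, (A.submatrix id κ).det * (B.submatrix κ id).det := by
  have hinj : ∀ p ∈ (univ : Finset (Fin n → ι)),
      (∏ i, B (p i) i) * (A.submatrix id p).det ≠ 0 → Injective p := fun p _ hp =>
    by_contra fun h => hp (by rw [det_submatrix_eq_zero_of_not_injective A h, mul_zero])
  rw [det_mul_eq_sum_prod_mul_det_submatrix, ← Finset.sum_filter_of_ne hinj,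
    Finset.sum_injective_eq_sum_strictMono_sum_perm]
  refine Finset.sum_congr rfl fun κ _ => ?_
  have hperm : ∀ τ : Perm (Fin n), (A.submatrix id (κ ∘ τ)).det =
      Perm.sign τ * (A.submatrix id κ).det := fun τ => det_permute' τ (A.submatrix id κ)
  simp only [hperm, det_apply' (B.submatrix κ id), Finset.mul_sum]
  refine Finset.sum_congr rfl fun τ _ => ?_
  simp only [submatrix_apply, id, Function.comp_apply]
  ring

end Matrix

namespace IncidenceAlgebra
variable {𝕜 α : Type*} [Ring 𝕜] [PartialOrder α] [LocallyFiniteOrder α] [DecidableEq α]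
  [DecidableLE α]

theorem sum_filter_le_sum_mu_mul_of_isLowerSet {S : Finset α} (hS : IsLowerSet (S : Set α))
    (F : α → 𝕜) {w : α} (hw : w ∈ S) :
    ∑ v ∈ S with v ≤ w, ∑ y ∈ S, mu 𝕜 y v * F y = F w := by
  have hdelta : ∀ y, ∑ v ∈ S with v ≤ w, mu 𝕜 y v = if y = w then 1 else 0 := fun y => by
    rw [← sum_Icc_mu_right y w]
    refine (Finset.sum_subset (fun v hv => ?_) fun v hv hv' => ?_).symm
    · obtain ⟨hyv, hvw⟩ := mem_Icc.1 hv
      exact mem_filter.2 ⟨hS hvw hw, hvw⟩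
    · exact apply_eq_zero_of_not_le (fun hyv => hv' (mem_Icc.2 ⟨hyv, (mem_filter.1 hv).2⟩)) _
  rw [Finset.sum_comm]
  simp only [← Finset.sum_mul, hdelta, ite_mul, one_mul, zero_mul, Finset.sum_ite_eq', if_pos hw]

theorem sum_filter_le_sum_mu_mul_of_injective {ι : Type*} [Fintype ι] {x : ι → α}
    (hx : Injective x) (hlower : IsLowerSet (Set.range x)) (F : α → 𝕜) {w : α}
    (hw : w ∈ Set.range x) :
    ∑ k with x k ≤ w, ∑ j, mu 𝕜 (x j) (x k) * F (x j) = F w := by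
  have hS : IsLowerSet ((univ.image x : Finset α) : Set α) := by
    rwa [coe_image, coe_univ, Set.image_univ]
  rw [← sum_filter_le_sum_mu_mul_of_isLowerSet hS F (by simpa using hw), filter_image]
  simp only [sum_image hx.injOn]

end IncidenceAlgebra

theorem li_expansion_general {L R : Type*} [DecidableEq L] [SemilatticeInf L]
    [LocallyFiniteOrder L] [DecidableRel ((· ≤ ·) : L → L → Prop)] [CommRing R]
    {n m : ℕ} (x : Fin (n + m) → L) (hinj : Function.Injective x)
    -- the range of `x` (i.e. `X̄`) is factor closed in `L`
    (hfc : ∀ (j : Fin (n + m)) (w : L), w ≤ x j → ∃ j' : Fin (n + m), x j' = w)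
    (z : Fin n → L) (hzmem : ∀ i, ∃ j : Fin (n + m), z i = x j)
    (F : Fin n → L → R)
    (f : Fin n → L → R)
    (hf : ∀ i v, f i v = ∑ j : Fin (n + m), IncidenceAlgebra.mu R (x j) v * F i (x j))
    (C : Fin n → Fin (n + m) → R)
    (hC : ∀ i j, C i j = if x j ≤ z i then f i (x j) else 0) :
    Matrix.det (Matrix.of fun i j : Fin n => F i (z i ⊓ x (Fin.castAdd m j))) =
      ∑ κ ∈ Finset.univ.filter
          (fun κ : Fin n → Fin (n + m) => ∀ i j : Fin n, i < j → κ i < κ j),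
        Matrix.det (Matrix.of fun i j : Fin n => C i (κ j)) *
          Matrix.det (Matrix.of fun i j : Fin n =>
            if x (κ i) ≤ x (Fin.castAdd m j) then (1 : R) else 0) := by
  have hlower : IsLowerSet (Set.range x) := fun _ b hba ⟨j, hj⟩ => hfc j b (hj ▸ hba)
  have hfactor : (Matrix.of fun i j : Fin n => F i (z i ⊓ x (Fin.castAdd m j))) =
      Matrix.of C * Matrix.of fun k j => if x k ≤ x (Fin.castAdd m j) then (1 : R) else 0 := by
    ext i j
    obtain ⟨k₀, hk₀⟩ := hzmem i
    have hw : z i ⊓ x (Fin.castAdd m j) ∈ Set.range x := hlower (hk₀ ▸ inf_le_left) ⟨k₀, rfl⟩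
    rw [Matrix.of_apply, ← IncidenceAlgebra.sum_filter_le_sum_mu_mul_of_injective hinj hlower
      (F i) hw, Finset.sum_filter]
    simp only [Matrix.mul_apply, Matrix.of_apply, hC, hf, le_inf_iff, mul_boole, ← ite_and,
      and_comm]
  rw [hfactor, Matrix.det_mul_eq_sum_strictMono]
  exact Finset.sum_congr (Finset.filter_congr fun κ _ => ⟨fun h i j hij => h hij,
    fun h i j hij => h i j hij⟩) fun _ _ => rfl

/-- let `L` be a finite meet-semilattice, `X = {x₁,…,x_n}` and
`X̄ = {x₁,…,x_{n+m}}` the smallest factor-closed subset of `L` containing `X`; for each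
`1 ≤ i ≤ n` fix `z i ∈ X̄` with `z i ≤ xᵢ`, a function `F i` on `X̄`, and set
`f i v = ∑_{y ∈ X̄} μ(y,v) F i y`.  With `C_{i,j} = f i (x_j)` if `x_j ≤ z i` and `0`
otherwise, and `ζ(u,v) = 1` if `u ≤ v`, `0` otherwise, one has
`det(F i (z i ∧ x_j))_{1≤i,j≤n} = ∑_{k₁<⋯<k_n} det(C_{i,k_j}) ⋅ det(ζ(x_{k_i},x_j))`. -/
theorem li_expansion {L R : Type*} [Fintype L] [DecidableEq L] [SemilatticeInf L]
    [LocallyFiniteOrder L] [DecidableRel ((· ≤ ·) : L → L → Prop)] [CommRing R]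
    {n m : ℕ} (x : Fin (n + m) → L) (hinj : Function.Injective x)
    -- the range of `x` (i.e. `X̄`) is factor closed in `L`
    (hfc : ∀ (j : Fin (n + m)) (w : L), w ≤ x j → ∃ j' : Fin (n + m), x j' = w)
    -- `X̄` is the smallest such subset: every element of `X̄` lies below some element of `X`
    (hmin : ∀ j : Fin (n + m), ∃ i : Fin n, x j ≤ x (Fin.castAdd m i))
    (z : Fin n → L) (hzmem : ∀ i, ∃ j : Fin (n + m), z i = x j)
    (hz : ∀ i : Fin n, z i ≤ x (Fin.castAdd m i))
    (F : Fin n → L → R)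
    (f : Fin n → L → R)
    (hf : ∀ i v, f i v = ∑ j : Fin (n + m), IncidenceAlgebra.mu R (x j) v * F i (x j))
    (C : Fin n → Fin (n + m) → R)
    (hC : ∀ i j, C i j = if x j ≤ z i then f i (x j) else 0) :
    Matrix.det (Matrix.of fun i j : Fin n => F i (z i ⊓ x (Fin.castAdd m j))) =
      ∑ κ ∈ Finset.univ.filter
          (fun κ : Fin n → Fin (n + m) => ∀ i j : Fin n, i < j → κ i < κ j),
        Matrix.det (Matrix.of fun i j : Fin n => C i (κ j)) *
          Matrix.det (Matrix.of fun i j : Fin n =>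
            if x (κ i) ≤ x (Fin.castAdd m j) then (1 : R) else 0) :=
  li_expansion_general x hinj hfc z hzmem F f hf C hC
end

section
/- For every n ≥ 1, the determinant of the n × n matrix whose (i,j) entry is gcd(i,j), for 1 ≤ i,j ≤ n, equals ∏_{i=1}^n φ(i), where φ is Euler's totient function. -/
/-!
Let `L` be the `n × n` divisibility matrix, `L i d = 1` iff `d ∣ i`. For any `g`, the matrix
`L · diag(g) · Lᵀ` has entries `∑_{d ∣ i, d ∣ j} g d = ∑_{d ∣ gcd(i,j)} g d`, and `L` is
unitriangular, so the determinant of this matrix is `∏ g(i)`. Gauss's identity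
`∑_{d ∣ m} φ(d) = m` turns it into the gcd matrix when `g = φ`.
-/

open Matrix Finset

theorem Finset.sum_fin_ite_succ_dvd {R : Type*} [AddCommMonoid R] {n m : ℕ} (hm : m ≠ 0)
    (hmn : m ≤ n) (f : ℕ → R) :
    ∑ k : Fin n, (if (k : ℕ) + 1 ∣ m then f ((k : ℕ) + 1) else 0) = ∑ d ∈ m.divisors, f d := by
  have hvanish : ∀ d ∈ range (n + 1), d ∉ range (m + 1) → (if d ∣ m then f d else 0) = 0 :=
    fun d _ hd => if_neg fun h => hd (mem_range.mpr (Nat.lt_succ_of_le (Nat.divisor_le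
      (Nat.mem_divisors.mpr ⟨h, hm⟩))))
  rw [← Nat.filter_dvd_eq_divisors hm, sum_filter,
    sum_subset (range_subset_range.mpr (by omega)) hvanish, sum_range_succ',
    Fin.sum_univ_eq_sum_range (fun k => if k + 1 ∣ m then f (k + 1) else 0)]
  simp [hm]

namespace Matrix

/-- Indices are shifted by one: row `i` and column `d` of `Fin n` stand for `i + 1` and `d + 1`. -/
def divisibility (R : Type*) [Zero R] [One R] (n : ℕ) : Matrix (Fin n) (Fin n) R :=
  of fun i d => if (d : ℕ) + 1 ∣ (i : ℕ) + 1 then 1 else 0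

variable {R : Type*} [CommRing R]

theorem divisibility_isLowerTriangular (n : ℕ) : (divisibility R n).IsLowerTriangular := by
  intro i d hid
  have : ¬ (d : ℕ) + 1 ∣ (i : ℕ) + 1 := fun h =>
    absurd (Nat.le_of_dvd (Nat.succ_pos _) h) (by simpa using hid)
  simp [divisibility, this]

theorem det_divisibility (n : ℕ) : (divisibility R n).det = 1 := by
  rw [det_of_isLowerTriangular _ (divisibility_isLowerTriangular n)]
  exact prod_eq_one fun i _ => by simp [divisibility]

theorem divisibility_mul_diagonal_mul_transpose (n : ℕ) (g : ℕ → R) :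
    divisibility R n * diagonal (fun d : Fin n => g ((d : ℕ) + 1)) * (divisibility R n)ᵀ =
      of fun i j : Fin n => ∑ d ∈ (Nat.gcd ((i : ℕ) + 1) ((j : ℕ) + 1)).divisors, g d := by
  ext i j
  have hgcd : Nat.gcd ((i : ℕ) + 1) ((j : ℕ) + 1) ≤ n :=
    (Nat.gcd_le_left _ (Nat.succ_pos _)).trans i.isLt
  rw [of_apply, ← sum_fin_ite_succ_dvd (Nat.gcd_pos_of_pos_left _ (Nat.succ_pos _)).ne' hgcd,
    mul_apply]
  refine sum_congr rfl fun k _ => ?_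
  simp only [mul_diagonal, divisibility, transpose_apply, of_apply, Nat.dvd_gcd_iff]
  split_ifs <;> simp_all

theorem det_of_sum_divisors_gcd (n : ℕ) (g : ℕ → R) :
    (of fun i j : Fin n => ∑ d ∈ (Nat.gcd ((i : ℕ) + 1) ((j : ℕ) + 1)).divisors, g d).det =
      ∏ i : Fin n, g ((i : ℕ) + 1) := by
  rw [← divisibility_mul_diagonal_mul_transpose, det_mul, det_mul, det_transpose,
    det_divisibility, det_diagonal, one_mul, mul_one]

end Matrix

theorem smith_determinant_general (n : ℕ) :
    Matrix.det (Matrix.of fun i j : Fin n => (Nat.gcd ((i : ℕ) + 1) ((j : ℕ) + 1) : ℤ)) =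
      ∏ i : Fin n, (Nat.totient ((i : ℕ) + 1) : ℤ) := by
  simpa only [← Nat.cast_sum, Nat.sum_totient] using
    det_of_sum_divisors_gcd n fun d => (Nat.totient d : ℤ)

/-- Smith's determinant: for every `n ≥ 1`, the determinant of the `n × n`
matrix with `(i,j)` entry `gcd(i,j)` (for `1 ≤ i,j ≤ n`) equals `∏_{i=1}^n φ(i)`, where `φ`
is Euler's totient function. -/
theorem smith_determinant (n : ℕ) (hn : 1 ≤ n) :
    Matrix.det (Matrix.of fun i j : Fin n => (Nat.gcd ((i : ℕ) + 1) ((j : ℕ) + 1) : ℤ)) =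
      ∏ i : Fin n, (Nat.totient ((i : ℕ) + 1) : ℤ) :=
  smith_determinant_general n
end
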